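/- arXiv:1908.10064 — 3 statements merged into one kernel-verified Lean document; each statement's English description precedes it below -/
import Mathlib

section
/- Let C be a coalgebra over a field k with comultiplication Δ : C → C ⊗ C and counit ε : C → k. Let V ⊆ C be a coideal, i.e. a k-subspace with Δ(V) ⊆ V⊗C + C⊗V and ε(V) = 0, and let D ⊆ C be a subcoalgebra, i.e. a k-subspace with Δ(D) ⊆ D⊗D. Then V ∩ D is a coideal of D (and hence of C): Δ(V ∩ D) ⊆ (V ∩ D)⊗D + D⊗(V ∩ D) and ε(V ∩ D) = 0. -/
open TensorProduct

/-- For submodules `p q` of a module `M`, `subspaceTensor p q` is the image of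
`p ⊗ q` in `M ⊗ M`, i.e. the span of all elementary tensors `x ⊗ y` with
`x ∈ p`, `y ∈ q`. -/
noncomputable def subspaceTensor {k M : Type*} [CommRing k] [AddCommGroup M] [Module k M]
    (p q : Submodule k M) : Submodule k (M ⊗[k] M) :=
  Submodule.map₂ (TensorProduct.mk k M M) p q

/-! Over a field, `V` has a complement `U` with `D ⊆ (V ∩ D) + U`, so the projection `π` of `C`
onto `V` along `U` maps `D` into `V ∩ D`, and `π' = 1 - π` vanishes on `V`. Expanding
`1 ⊗ 1 = π ⊗ 1 + π' ⊗ π + π' ⊗ π'` on `Δx` for `x ∈ V ∩ D`, the first term lies in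
`(V ∩ D) ⊗ D` and the second in `D ⊗ (V ∩ D)` because `Δx ∈ D ⊗ D`, while the third
vanishes because `Δx ∈ V ⊗ C + C ⊗ V`. -/

theorem exists_isCompl_le_inf_sup {α : Type*} [Lattice α] [BoundedOrder α] [IsModularLattice α]
    [ComplementedLattice α] (a b : α) : ∃ c, IsCompl a c ∧ b ≤ a ⊓ b ⊔ c := by
  obtain ⟨w, hdisj, hsup⟩ :=
    IsModularLattice.exists_disjoint_and_sup_eq (inf_le_right : a ⊓ b ≤ b)
  have hwb : w ≤ b := hsup ▸ le_sup_right
  have hwa : Disjoint w a := disjoint_iff_inf_le.mpr <|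
    (le_inf inf_le_left (le_inf inf_le_right (inf_le_left.trans hwb))).trans hdisj.symm.le_bot
  obtain ⟨c, hwc, hca⟩ := hwa.exists_isCompl
  exact ⟨c, hca.symm, hsup.ge.trans (sup_le_sup_left hwc _)⟩

namespace Submodule

variable {R E : Type*} [Ring R] [AddCommGroup E] [Module R E]

theorem projection_mem_of_le_inf_sup {p q r : Submodule R E} (hpq : IsCompl p q)
    (hr : r ≤ p ⊓ r ⊔ q) {x : E} (hx : x ∈ r) : p.projection q hpq x ∈ p ⊓ r := by
  obtain ⟨e, he, u, hu, rfl⟩ := mem_sup.mp (hr hx)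
  rw [map_add, projection_apply_of_mem_left hpq he.1, projection_apply_of_mem_right hpq hu,
    add_zero]
  exact he

end Submodule

section subspaceTensor

variable {k M : Type*} [CommRing k] [AddCommGroup M] [Module k M]

theorem map_subspaceTensor_le {p q p' q' : Submodule k M} {f g : M →ₗ[k] M}
    (hf : Set.MapsTo f p p') (hg : Set.MapsTo g q q') :
    (subspaceTensor p q).map (TensorProduct.map f g) ≤ subspaceTensor p' q' := by
  refine Submodule.map_le_iff_le_comap.mpr (Submodule.map₂_le.mpr fun x hx y hy => ?_)
  rw [Submodule.mem_comap, mk_apply, map_tmul]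
  exact Submodule.apply_mem_map₂ _ (hf hx) (hg hy)

theorem subspaceTensor_sup_le_ker_map {p : Submodule k M} {f : M →ₗ[k] M}
    (hf : Set.MapsTo f p (⊥ : Submodule k M)) :
    subspaceTensor p ⊤ ⊔ subspaceTensor ⊤ p ≤ LinearMap.ker (TensorProduct.map f f) := by
  rw [LinearMap.le_ker_iff_map, Submodule.map_sup, eq_bot_iff]
  refine sup_le ?_ ?_
  · calc _ ≤ subspaceTensor ⊥ ⊤ := map_subspaceTensor_le hf fun _ _ => Submodule.mem_top
      _ = ⊥ := Submodule.map₂_bot_left _ _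
  · calc _ ≤ subspaceTensor ⊤ ⊥ := map_subspaceTensor_le (fun _ _ => Submodule.mem_top) hf
      _ = ⊥ := Submodule.map₂_bot_right _ _

end subspaceTensor

theorem TensorProduct.map_add_map_add_map_eq_id {R M : Type*} [CommRing R] [AddCommGroup M]
    [Module R M] {f g : M →ₗ[R] M} (hfg : f + g = LinearMap.id) :
    map f LinearMap.id + map g f + map g g = LinearMap.id := by
  rw [add_assoc, ← map_add_right, hfg, ← map_add_left, hfg, map_id]

/-- Let `C` be a coalgebra over a field `k`, let `V ⊆ C` be a coideal
(`Δ(V) ⊆ V⊗C + C⊗V` and `ε(V) = 0`) and let `D ⊆ C` be a subcoalgebra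
(`Δ(D) ⊆ D⊗D`). Then `V ∩ D` is a coideal of `D` (hence of `C`):
`Δ(V ∩ D) ⊆ (V ∩ D)⊗D + D⊗(V ∩ D)` and `ε(V ∩ D) = 0`. -/
theorem inf_subcoalgebra_coideal {k C : Type*} [Field k] [AddCommGroup C] [Module k C]
    [Coalgebra k C] (V D : Submodule k C)
    (hVcomul : V.map (Coalgebra.comul (R := k)) ≤ subspaceTensor V ⊤ ⊔ subspaceTensor ⊤ V)
    (hVcounit : ∀ v ∈ V, Coalgebra.counit (R := k) v = 0)
    (hD : D.map (Coalgebra.comul (R := k)) ≤ subspaceTensor D D) :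
    (V ⊓ D).map (Coalgebra.comul (R := k)) ≤
      subspaceTensor (V ⊓ D) D ⊔ subspaceTensor D (V ⊓ D) ∧
    ∀ v ∈ V ⊓ D, Coalgebra.counit (R := k) v = 0 := by
  refine ⟨?_, fun v hv => hVcounit v hv.1⟩
  rintro _ ⟨x, ⟨hxV, hxD⟩, rfl⟩
  obtain ⟨U, hVU, hDU⟩ := exists_isCompl_le_inf_sup V D
  set π := V.projection U hVU
  set π' := U.projection V hVU.symm
  have hπ : π + π' = LinearMap.id := Submodule.projection_add_projection_eq_id hVU
  have hπD : Set.MapsTo π D (V ⊓ D : Submodule k C) :=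
    fun _ hd => Submodule.projection_mem_of_le_inf_sup hVU hDU hd
  have hπ'D : Set.MapsTo π' D D := fun d hd => by
    rw [Submodule.projection_eq_self_sub_projection hVU]
    exact D.sub_mem hd (hπD hd).2
  have hπ'V : Set.MapsTo π' V (⊥ : Submodule k C) := fun _ hv =>
    Submodule.projection_apply_of_mem_right hVU.symm hv
  have hΔD : Coalgebra.comul (R := k) x ∈ subspaceTensor D D := hD ⟨x, hxD, rfl⟩
  have hΔV : TensorProduct.map π' π' (Coalgebra.comul (R := k) x) = 0 :=
    subspaceTensor_sup_le_ker_map hπ'V (hVcomul ⟨x, hxV, rfl⟩)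
  rw [← LinearMap.id_apply (R := k) (Coalgebra.comul x), ← map_add_map_add_map_eq_id hπ]
  simp only [LinearMap.add_apply, hΔV, add_zero]
  exact add_mem
    (Submodule.mem_sup_left (map_subspaceTensor_le hπD (fun _ hy => hy) ⟨_, hΔD, rfl⟩))
    (Submodule.mem_sup_right (map_subspaceTensor_le hπ'D hπD ⟨_, hΔD, rfl⟩))
end

section
/- Let H be a commutative Hopf algebra over a field k with comultiplication Δ, counit ε and antipode S. Let I ⊆ H be a Hopf ideal, i.e. an ideal of H that is a coideal (Δ(I) ⊆ I⊗H + H⊗I and ε(I) = 0) and satisfies S(I) ⊆ I. Let D ⊆ H be a k-subspace that is a subcoalgebra (Δ(D) ⊆ D⊗D) and satisfies S(D) ⊆ D. Then the ideal of H generated by I ∩ D is a Hopf ideal. (Applied to H = k[GL_n] = k[Z, 1/det Z], I the defining ideal of a closed subgroup G of GL_n, and D = k[Z,Z^{-1}]_{≤d}, this gives that the ideal of k[GL_n] generated by I(G) ∩ k[Z,Z^{-1}]_{≤d} is a Hopf ideal.) -/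
open TensorProduct

/-- A `k`-subspace `W` of a Hopf algebra `H` is a coideal if
`Δ(W) ⊆ W⊗H + H⊗W` and `ε(W) = 0`. -/
def IsCoideal {k H : Type*} [Field k] [CommRing H] [HopfAlgebra k H]
    (W : Submodule k H) : Prop :=
  W.map (Coalgebra.comul (R := k)) ≤ subspaceTensor W ⊤ ⊔ subspaceTensor ⊤ W ∧
    ∀ x ∈ W, Coalgebra.counit (R := k) x = 0

/-!
Over a field, `I = (I ∩ D) ⊕ C` with `C ∩ D = 0`, so there is a linear projection `p` of `H`
onto `D` sending `I` into `I ∩ D`. Then `p ⊗ p` fixes `Δ(I ∩ D) ⊆ D ⊗ D` and maps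
`I ⊗ H + H ⊗ I` into `(I ∩ D) ⊗ H + H ⊗ (I ∩ D)`, so `I ∩ D` is a coideal. The ideal generated
by a coideal is again one, since `Δ` and `ε` are algebra maps and `J ⊗ H + H ⊗ J` is an ideal of
`H ⊗ H`; it is `S`-stable because `S` is an algebra map, `H` being commutative.
-/

theorem Submodule.exists_linearMap_eqOn_id_mapsTo_inf {k V : Type*} [Field k] [AddCommGroup V]
    [Module k V] (A D : Submodule k V) :
    ∃ p : V →ₗ[k] V, Set.EqOn p id D ∧ Set.MapsTo p A (A ⊓ D) := by
  obtain ⟨C, hdisj, hsup⟩ :=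
    IsModularLattice.exists_disjoint_and_sup_eq (inf_le_left : A ⊓ D ≤ A)
  have hCA : C ≤ A := hsup ▸ le_sup_right
  have hCD : Disjoint C D :=
    disjoint_iff_inf_le.mpr fun x hx => hdisj.le_bot ⟨⟨hCA hx.1, hx.2⟩, hx.1⟩
  obtain ⟨E, hCE, hED⟩ := hCD.exists_isCompl
  refine ⟨D.projection E hED.symm, fun x hx => D.projection_apply_of_mem_left _ hx, ?_⟩
  show A ≤ (A ⊓ D).comap _
  refine hsup.ge.trans (sup_le (fun x hx => ?_) (fun x hx => ?_))
  · rw [Submodule.mem_comap, D.projection_apply_of_mem_left _ hx.2]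
    exact hx
  · rw [Submodule.mem_comap, D.projection_apply_of_mem_right _ (hCE hx)]
    exact zero_mem _

section SubspaceTensor

variable {k M : Type*} [CommRing k] [AddCommGroup M] [Module k M]

theorem subspaceTensor_mono {p₁ p₂ q₁ q₂ : Submodule k M} (hp : p₁ ≤ p₂) (hq : q₁ ≤ q₂) :
    subspaceTensor p₁ q₁ ≤ subspaceTensor p₂ q₂ :=
  Submodule.map₂_le_map₂ hp hq

theorem map_subspaceTensor (f g : M →ₗ[k] M) (p q : Submodule k M) :
    (subspaceTensor p q).map (TensorProduct.map f g) = subspaceTensor (p.map f) (q.map g) := by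
  simp only [subspaceTensor, Submodule.map_map₂, Submodule.map₂_map_map]
  rfl

theorem TensorProduct.map_apply_eq_self_of_mem_subspaceTensor {f : M →ₗ[k] M}
    {p : Submodule k M} (hf : Set.EqOn f id p) {t : M ⊗[k] M} (ht : t ∈ subspaceTensor p p) :
    TensorProduct.map f f t = t := by
  have hfp : f ∘ₗ p.subtype = p.subtype := LinearMap.ext fun x => hf x.2
  obtain ⟨s, rfl⟩ : t ∈ LinearMap.range (TensorProduct.mapIncl p p) := by
    rwa [TensorProduct.range_mapIncl]
  rw [← LinearMap.comp_apply, ← TensorProduct.map_comp, hfp]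

end SubspaceTensor

theorem subspaceTensor_sup_inf_le {k V : Type*} [Field k] [AddCommGroup V] [Module k V]
    (A D : Submodule k V) :
    (subspaceTensor A ⊤ ⊔ subspaceTensor ⊤ A) ⊓ subspaceTensor D D ≤
      subspaceTensor (A ⊓ D) ⊤ ⊔ subspaceTensor ⊤ (A ⊓ D) := by
  obtain ⟨p, hpD, hpA⟩ := A.exists_linearMap_eqOn_id_mapsTo_inf D
  rintro t ⟨htA, htD⟩
  have hmap : (subspaceTensor A ⊤ ⊔ subspaceTensor ⊤ A).map (TensorProduct.map p p) ≤
      subspaceTensor (A ⊓ D) ⊤ ⊔ subspaceTensor ⊤ (A ⊓ D) := by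
    rw [Submodule.map_sup, map_subspaceTensor, map_subspaceTensor]
    exact sup_le_sup (subspaceTensor_mono (Submodule.map_le_iff_le_comap.mpr hpA) le_top)
      (subspaceTensor_mono le_top (Submodule.map_le_iff_le_comap.mpr hpA))
  rw [← TensorProduct.map_apply_eq_self_of_mem_subspaceTensor hpD htD]
  exact hmap (Submodule.mem_map_of_mem htA)

section IdealTensor

variable {k H : Type*} [CommRing k] [Ring H] [Algebra k H]

theorem mul_mem_subspaceTensor {p q : Ideal H} (u : H ⊗[k] H) {t : H ⊗[k] H}
    (ht : t ∈ subspaceTensor (p.restrictScalars k) (q.restrictScalars k)) :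
    u * t ∈ subspaceTensor (p.restrictScalars k) (q.restrictScalars k) := by
  induction u using TensorProduct.induction_on with
  | zero => simpa only [zero_mul] using zero_mem _
  | tmul c d =>
    have hle : subspaceTensor (p.restrictScalars k) (q.restrictScalars k) ≤
        (subspaceTensor (p.restrictScalars k) (q.restrictScalars k)).comap
          (LinearMap.mulLeft k (c ⊗ₜ[k] d)) := by
      refine Submodule.map₂_le.mpr fun x hx y hy => ?_
      rw [Submodule.mem_comap, LinearMap.mulLeft_apply, TensorProduct.mk_apply,
        Algebra.TensorProduct.tmul_mul_tmul]
      exact Submodule.apply_mem_map₂ _ (p.mul_mem_left c hx) (q.mul_mem_left d hy)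
    exact hle ht
  | add u v hu hv => simpa only [add_mul] using add_mem hu hv

variable (k) in
noncomputable def Ideal.tensorSupTensor (J : Ideal H) : Ideal (H ⊗[k] H) where
  __ := (subspaceTensor (J.restrictScalars k) ⊤ ⊔ subspaceTensor ⊤ (J.restrictScalars k))
  smul_mem' u t ht := by
    rw [← Submodule.restrictScalars_top k H H] at ht ⊢
    obtain ⟨t₁, ht₁, t₂, ht₂, rfl⟩ := Submodule.mem_sup.mp ht
    rw [smul_eq_mul, mul_add]
    exact add_mem (Submodule.mem_sup_left (mul_mem_subspaceTensor u ht₁))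
      (Submodule.mem_sup_right (mul_mem_subspaceTensor u ht₂))

end IdealTensor

section Coideal

open Coalgebra HopfAlgebra

variable {k H : Type*} [Field k] [CommRing H] [HopfAlgebra k H]

theorem IsCoideal.inf_of_map_comul_le {A D : Submodule k H} (hA : IsCoideal A)
    (hD : D.map (comul (R := k)) ≤ subspaceTensor D D) : IsCoideal (A ⊓ D) :=
  ⟨Submodule.map_le_iff_le_comap.mpr fun x hx =>
      subspaceTensor_sup_inf_le A D ⟨hA.1 ⟨x, hx.1, rfl⟩, hD ⟨x, hx.2, rfl⟩⟩,
    fun x hx => hA.2 x hx.1⟩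

theorem IsCoideal.ideal_span {N : Submodule k H} (hN : IsCoideal N) :
    IsCoideal ((Ideal.span (N : Set H)).restrictScalars k) := by
  set J := Ideal.span (N : Set H)
  have hNJ : N ≤ J.restrictScalars k := Ideal.subset_span
  have hcomul : J ≤ (J.tensorSupTensor k).comap (Bialgebra.comulAlgHom k H) :=
    Ideal.span_le.mpr fun x hx => sup_le_sup (subspaceTensor_mono hNJ le_rfl)
      (subspaceTensor_mono le_rfl hNJ) (hN.1 (Submodule.mem_map_of_mem hx))
  have hcounit : J ≤ RingHom.ker (Bialgebra.counitAlgHom k H) :=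
    Ideal.span_le.mpr fun x hx => hN.2 x hx
  exact ⟨Submodule.map_le_iff_le_comap.mpr fun x hx => hcomul hx, fun x hx => hcounit hx⟩

theorem antipode_mem_ideal_span {N : Submodule k H} (hN : ∀ x ∈ N, antipode k x ∈ N) {x : H}
    (hx : x ∈ Ideal.span (N : Set H)) : antipode k x ∈ Ideal.span (N : Set H) :=
  (Ideal.span_le (I := (Ideal.span (N : Set H)).comap (antipodeAlgHom k H))).mpr
    (fun y hy => Ideal.subset_span (hN y hy)) hx

end Coideal

/-- Let `H` be a commutative Hopf algebra over a field `k` with antipode `S`.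
Let `I ⊆ H` be a Hopf ideal (an ideal which is a coideal and satisfies `S(I) ⊆ I`)
and let `D ⊆ H` be a subcoalgebra (`Δ(D) ⊆ D⊗D`) with `S(D) ⊆ D`. Then the ideal
of `H` generated by `I ∩ D` is again a Hopf ideal. -/
theorem ideal_span_inf_subcoalgebra_is_hopf_ideal {k H : Type*} [Field k] [CommRing H]
    [HopfAlgebra k H] (I : Ideal H) (D : Submodule k H)
    (hIcoideal : IsCoideal (I.restrictScalars k))
    (hIantipode : ∀ x ∈ I, HopfAlgebra.antipode (R := k) x ∈ I)
    (hDcomul : D.map (Coalgebra.comul (R := k)) ≤ subspaceTensor D D)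
    (hDantipode : ∀ x ∈ D, HopfAlgebra.antipode (R := k) x ∈ D) :
    IsCoideal ((Ideal.span ((I.restrictScalars k ⊓ D : Submodule k H) : Set H)).restrictScalars k)
      ∧ ∀ x ∈ Ideal.span ((I.restrictScalars k ⊓ D : Submodule k H) : Set H),
          HopfAlgebra.antipode (R := k) x ∈
            Ideal.span ((I.restrictScalars k ⊓ D : Submodule k H) : Set H) :=
  ⟨(hIcoideal.inf_of_map_comul_le hDcomul).ideal_span,
    fun _ => antipode_mem_ideal_span fun x hx =>
      Submodule.mem_inf.mpr ⟨hIantipode x hx.1, hDantipode x hx.2⟩⟩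
end

section
/- Fix integers n, s ≥ 1, 1 ≤ r ≤ s, indices 1 ≤ i₁ < ⋯ < i_r ≤ s, an integer d ≥ 0, and an s×s matrix B whose entries are polynomials with integer coefficients in 2n² variables of total degree at most d (to be evaluated at the entries of an invertible n×n matrix g and of g^{-1}). Then there exist (s−r)·r expressions Q₁,…,Q_{(s−r)r}, each a polynomial with integer coefficients in the sr entries of an s×r matrix of variables T, in the inverse of det((T_{i_ℓ,j})_{1≤ℓ,j≤r}), and in 2n² further variables in which it has total degree at most d, such that the following holds: for every field k, every matrix A ∈ k^{s×r} with det((A_{i_ℓ,j})_{1≤ℓ,j≤r}) ≠ 0, every commutative k-algebra R and every g ∈ GL_n(R), the R-submodule of R^s generated by the columns of A is mapped into itself by the matrix B(g, g^{-1}) ∈ M_s(R) if and only if Q_i(A, g, g^{-1}) = 0 in R for all i = 1,…,(s−r)r. Here B(g, g^{-1}) denotes the entrywise evaluation of B with the first n² variables set to the entries of g and the last n² to the entries of g^{-1}, and Q_i(A, g, g^{-1}) denotes evaluation with T set to A and the remaining variables set to the entries of g and g^{-1}. -/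
/-!
Over the base change of `k`, replace `A` by `C = A * A_I⁻¹`: it has the same column space and its
rows `I = range idx` form the identity matrix, so `w` lies in the column space iff `w = C * w_I`.
Hence the column space is `M`-stable iff `M * C = C * (M * C)_I`, an identity whose rows in `I` hold
automatically; the remaining `(s - r) * r` entries are the equations. They are polynomial in `A`,
`1 / det A_I` and `M`, because generically `C = T * (u • adj T_I)` with `u = 1 / det T_I`, and since
`C` does not involve `g`, their degree in `g` is at most that of `M`.
-/

namespace MvPolynomial

variable {R σ M : Type*} [CommRing R] [AddCommMonoid M] [SemilatticeSup M] [OrderBot M]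

theorem weightedTotalDegree_mul_le [IsOrderedAddMonoid M] (w : σ → M) (p q : MvPolynomial σ R) :
    weightedTotalDegree w (p * q) ≤ weightedTotalDegree w p + weightedTotalDegree w q := by
  classical
  refine Finset.sup_le fun m hm => ?_
  obtain ⟨a, ha, b, hb, rfl⟩ := Finset.mem_add.1 (support_mul p q hm)
  rw [map_add]
  exact add_le_add (le_weightedTotalDegree w ha) (le_weightedTotalDegree w hb)

theorem weightedTotalDegree_add_le (w : σ → M) (p q : MvPolynomial σ R) :
    weightedTotalDegree w (p + q) ≤ weightedTotalDegree w p ⊔ weightedTotalDegree w q := by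
  classical
  refine Finset.sup_le fun m hm => ?_
  rcases Finset.mem_union.1 (support_add hm) with h | h
  · exact le_sup_of_le_left (le_weightedTotalDegree w h)
  · exact le_sup_of_le_right (le_weightedTotalDegree w h)

@[simp]
theorem weightedTotalDegree_neg (w : σ → M) (p : MvPolynomial σ R) :
    weightedTotalDegree w (-p) = weightedTotalDegree w p := by
  rw [weightedTotalDegree, support_neg, weightedTotalDegree]

theorem weightedTotalDegree_sub_le (w : σ → M) (p q : MvPolynomial σ R) :
    weightedTotalDegree w (p - q) ≤ weightedTotalDegree w p ⊔ weightedTotalDegree w q := by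
  simpa [sub_eq_add_neg] using weightedTotalDegree_add_le w p (-q)

theorem weightedTotalDegree_sum_le {ι : Type*} (w : σ → M) (s : Finset ι)
    (f : ι → MvPolynomial σ R) {d : M} (h : ∀ i ∈ s, weightedTotalDegree w (f i) ≤ d) :
    weightedTotalDegree w (∑ i ∈ s, f i) ≤ d :=
  Finset.sum_induction f (fun p => weightedTotalDegree w p ≤ d)
    (fun p q hp hq => (weightedTotalDegree_add_le w p q).trans (sup_le hp hq))
    (by rw [weightedTotalDegree_zero]; exact bot_le) h

theorem weightedTotalDegree_rename_eq_zero {τ : Type*} {e : σ → τ} {w : τ → ℕ}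
    (he : Function.Injective e) (hw : w ∘ e = 0) (p : MvPolynomial σ R) :
    weightedTotalDegree w (rename e p) = 0 := by
  rw [weightedTotalDegree_rename_of_injective he, hw]
  exact le_antisymm (Finset.sup_le fun m _ => by simp [Finsupp.weight_apply]) bot_le

end MvPolynomial

namespace Matrix

variable {R m ι κ : Type*} [CommRing R] [Fintype ι]

theorem range_mulVecLin_mul_le [Fintype κ] (C : Matrix m ι R) (X : Matrix ι κ R) :
    LinearMap.range (C * X).mulVecLin ≤ LinearMap.range C.mulVecLin := by
  rw [mulVecLin_mul]
  exact LinearMap.range_comp_le_range _ _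

def stabilityDefect [Fintype m] (M : Matrix m m R) (C : Matrix m ι R) (e : ι → m) :
    Matrix m ι R :=
  M * C - C * (M * C).submatrix e id

theorem map_stabilityDefect {S F : Type*} [CommRing S] [FunLike F R S] [RingHomClass F R S]
    [Fintype m] (f : F) (M : Matrix m m R) (C : Matrix m ι R) (e : ι → m) :
    (stabilityDefect M C e).map f = stabilityDefect (M.map f) (C.map f) e := by
  simp only [stabilityDefect, Matrix.map_sub _ (map_sub f), Matrix.map_mul, ← submatrix_map]

variable [DecidableEq ι]

theorem range_mulVecLin_mul_of_mul_eq_one {A : Matrix m ι R} {P Q : Matrix ι ι R}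
    (h : P * Q = 1) : LinearMap.range (A * P).mulVecLin = LinearMap.range A.mulVecLin := by
  refine le_antisymm (range_mulVecLin_mul_le _ _) ?_
  simpa [Matrix.mul_assoc, h] using range_mulVecLin_mul_le (A * P) Q

theorem mem_range_mulVecLin_iff_of_submatrix_eq_one {C : Matrix m ι R} {e : ι → m}
    (hC : C.submatrix e id = 1) {w : m → R} :
    w ∈ LinearMap.range C.mulVecLin ↔ C *ᵥ (w ∘ e) = w := by
  refine ⟨?_, fun hw => ⟨w ∘ e, hw⟩⟩
  rintro ⟨v, rfl⟩
  have hv : (C *ᵥ v) ∘ e = v := by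
    change C.submatrix e id *ᵥ v = v
    rw [hC, one_mulVec]
  rw [mulVecLin_apply, hv]

theorem range_mulVecLin_le_iff_of_submatrix_eq_one [Fintype κ] {C : Matrix m ι R}
    {e : ι → m} (hC : C.submatrix e id = 1) (N : Matrix m κ R) :
    LinearMap.range N.mulVecLin ≤ LinearMap.range C.mulVecLin ↔ C * N.submatrix e id = N := by
  refine ⟨fun h => ext_iff_mulVec.2 fun v => ?_, fun h => h ▸ range_mulVecLin_mul_le _ _⟩
  rw [← mulVec_mulVec]
  exact (mem_range_mulVecLin_iff_of_submatrix_eq_one hC).1 (h ⟨v, rfl⟩)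

theorem mul_submatrix_eq_iff_of_submatrix_eq_one [Fintype κ] {C : Matrix m ι R} {e : ι → m}
    (hC : C.submatrix e id = 1) (N : Matrix m κ R) :
    C * N.submatrix e id = N ↔ ∀ a ∉ Set.range e, ∀ j, (N - C * N.submatrix e id) a j = 0 := by
  have hrows : (C * N.submatrix e id).submatrix e id = N.submatrix e id := by
    rw [submatrix_mul _ _ _ id _ Function.bijective_id, submatrix_id_id, hC, Matrix.one_mul]
  refine ⟨fun h a _ j => by rw [h, sub_self, zero_apply], fun h => ?_⟩
  ext a j
  by_cases ha : a ∈ Set.range e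
  · obtain ⟨i, rfl⟩ := ha
    exact congrFun (congrFun hrows i) j
  · exact (sub_eq_zero.1 (h a ha j)).symm

variable [Fintype m]

theorem forall_mulVec_mem_range_iff_of_submatrix_eq_one {C : Matrix m ι R} {e : ι → m}
    (hC : C.submatrix e id = 1) (M : Matrix m m R) :
    (∀ w ∈ LinearMap.range C.mulVecLin, M *ᵥ w ∈ LinearMap.range C.mulVecLin) ↔
      ∀ a ∉ Set.range e, ∀ j, stabilityDefect M C e a j = 0 := by
  rw [stabilityDefect, ← mul_submatrix_eq_iff_of_submatrix_eq_one hC,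
    ← range_mulVecLin_le_iff_of_submatrix_eq_one hC, mulVecLin_mul, LinearMap.range_comp,
    Submodule.map_le_iff_le_comap]
  rfl

theorem forall_mulVec_mem_range_iff {A : Matrix m ι R} {e : ι → m} {P : Matrix ι ι R}
    (hP : A.submatrix e id * P = 1) (M : Matrix m m R) :
    (∀ w ∈ LinearMap.range A.mulVecLin, M *ᵥ w ∈ LinearMap.range A.mulVecLin) ↔
      ∀ a ∉ Set.range e, ∀ j, stabilityDefect M (A * P) e a j = 0 := by
  have hC : (A * P).submatrix e id = 1 := by
    rw [submatrix_mul _ _ _ id _ Function.bijective_id, submatrix_id_id, hP]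
  rw [← forall_mulVec_mem_range_iff_of_submatrix_eq_one hC,
    range_mulVecLin_mul_of_mul_eq_one (mul_eq_one_comm.1 hP)]

end Matrix

namespace Stabilizer

open MvPolynomial Matrix

variable {m ι γ : Type*} [Fintype ι]

theorem weightedTotalDegree_stabilityDefect_le [Fintype m] {R σ : Type*} [CommRing R]
    {w : σ → ℕ} {d : ℕ} {M : Matrix m m (MvPolynomial σ R)} {C : Matrix m ι (MvPolynomial σ R)}
    (e : ι → m) (hM : ∀ a b, weightedTotalDegree w (M a b) ≤ d)
    (hC : ∀ a j, weightedTotalDegree w (C a j) = 0) (a : m) (j : ι) :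
    weightedTotalDegree w (stabilityDefect M C e a j) ≤ d := by
  have hMC : ∀ a j, weightedTotalDegree w ((M * C) a j) ≤ d := fun a j =>
    weightedTotalDegree_sum_le _ _ _ fun b _ =>
      (weightedTotalDegree_mul_le _ _ _).trans (by rw [hC, add_zero]; exact hM a b)
  refine (weightedTotalDegree_sub_le _ _ _).trans (sup_le (hMC a j) ?_)
  exact weightedTotalDegree_sum_le _ _ _ fun l _ =>
    (weightedTotalDegree_mul_le _ _ _).trans (by rw [hC, zero_add]; exact hMC _ _)

theorem weight_elim_zero_elim_zero_one [Fintype m] [Fintype γ]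
    (x : (m × ι) ⊕ (Unit ⊕ γ) →₀ ℕ) :
    Finsupp.weight (Sum.elim 0 (Sum.elim 0 1)) x = ∑ v : γ, x (Sum.inr (Sum.inr v)) := by
  simp [Finsupp.weight_apply, Finsupp.sum_fintype, Fintype.sum_sum_type]

variable [DecidableEq ι]

/-- `T * (u • adj T_e)` for the generic matrix `T`; the variable `u` stands for `1 / det T_e`, so
this specializes to `A * A_e⁻¹`. -/
noncomputable def reducedColumns (e : ι → m) : Matrix m ι (MvPolynomial ((m × ι) ⊕ Unit) ℤ) :=
  let T : Matrix m ι (MvPolynomial ((m × ι) ⊕ Unit) ℤ) := of fun a j => X (Sum.inl (a, j))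
  T * ((X (Sum.inr ()) : MvPolynomial ((m × ι) ⊕ Unit) ℤ) • adjugate (T.submatrix e id))

theorem map_aeval_reducedColumns {R : Type*} [CommRing R] (e : ι → m) (A : Matrix m ι R)
    (u : R) :
    (reducedColumns e).map (aeval (Sum.elim (fun p => A p.1 p.2) fun _ => u)) =
      A * (u • adjugate (A.submatrix e id)) := by
  have hT : (of fun a j => (X (Sum.inl (a, j)) : MvPolynomial ((m × ι) ⊕ Unit) ℤ)).map
      (aeval (Sum.elim (fun p => A p.1 p.2) fun _ => u)) = A := by
    ext; simp
  rw [reducedColumns, Matrix.map_mul, Matrix.map_smul' _ _ _ (map_mul _), hT, aeval_X,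
    Sum.elim_inr, ← AlgHom.mapMatrix_apply, AlgHom.map_adjugate, AlgHom.mapMatrix_apply,
    ← submatrix_map, hT]

variable [Fintype m]

noncomputable def equations (e : ι → m) (B : Matrix m m (MvPolynomial γ ℤ)) :
    Matrix m ι (MvPolynomial ((m × ι) ⊕ (Unit ⊕ γ)) ℤ) :=
  stabilityDefect (B.map (rename (Sum.inr ∘ Sum.inr)))
    ((reducedColumns e).map (rename (Sum.map id Sum.inl))) e

theorem map_aeval_equations {R : Type*} [CommRing R] (e : ι → m)
    (B : Matrix m m (MvPolynomial γ ℤ)) (A : Matrix m ι R) (u : R) (ψ : γ → R) :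
    (equations e B).map (aeval (Sum.elim (fun p => A p.1 p.2) (Sum.elim (fun _ => u) ψ))) =
      stabilityDefect (B.map (aeval ψ)) (A * (u • adjugate (A.submatrix e id))) e := by
  rw [equations, map_stabilityDefect, Matrix.map_map, Matrix.map_map, ← map_aeval_reducedColumns]
  congr 2 <;> ext1 p <;> simp [aeval_rename, Sum.elim_comp_map, ← Function.comp_assoc]

theorem weightedTotalDegree_equations_le {d : ℕ} (e : ι → m)
    {B : Matrix m m (MvPolynomial γ ℤ)} (hB : ∀ a b, (B a b).totalDegree ≤ d) (a : m) (j : ι) :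
    weightedTotalDegree (Sum.elim 0 (Sum.elim 0 1)) (equations e B a j) ≤ d := by
  have hinr : Function.Injective (Sum.inr ∘ Sum.inr : γ → (m × ι) ⊕ (Unit ⊕ γ)) :=
    Sum.inr_injective.comp Sum.inr_injective
  have hemb : Function.Injective (Sum.map id Sum.inl : (m × ι) ⊕ Unit → (m × ι) ⊕ (Unit ⊕ γ)) :=
    Sum.map_injective.2 ⟨Function.injective_id, Sum.inl_injective⟩
  refine weightedTotalDegree_stabilityDefect_le e (fun a b => ?_) (fun a j => ?_) a j
  · rw [map_apply, weightedTotalDegree_rename_of_injective hinr]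
    exact (weightedTotalDegree_one (B a b)).le.trans (hB a b)
  · exact weightedTotalDegree_rename_eq_zero hemb (by ext (_ | _) <;> rfl) _

end Stabilizer

theorem uniform_definability_of_stabilizers_general
    {n s r : ℕ}
    (idx : Fin r → Fin s) (hidx : StrictMono idx) (d : ℕ)
    (B : Matrix (Fin s) (Fin s) (MvPolynomial (Fin 2 × Fin n × Fin n) ℤ))
    (hB : ∀ a b, (B a b).totalDegree ≤ d) :
    ∃ Q : Fin ((s - r) * r) →
        MvPolynomial ((Fin s × Fin r) ⊕ (Unit ⊕ (Fin 2 × Fin n × Fin n))) ℤ,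
      (∀ q, ∀ mono ∈ (Q q).support,
          ∑ v : Fin 2 × Fin n × Fin n, mono (Sum.inr (Sum.inr v)) ≤ d) ∧
      ∀ (k : Type*) [Field k] (A : Matrix (Fin s) (Fin r) k)
        (_ : Matrix.det (A.submatrix idx id) ≠ 0)
        (R : Type*) [CommRing R] [Algebra k R] (g : Matrix.GeneralLinearGroup (Fin n) R),
        ((∀ w ∈ Submodule.span R
            (Set.range fun j : Fin r => fun a : Fin s => algebraMap k R (A a j)),
          (B.map fun p => MvPolynomial.aeval
              (fun v : Fin 2 × Fin n × Fin n =>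
                if v.1 = 0 then (g : Matrix (Fin n) (Fin n) R) v.2.1 v.2.2
                else ((g⁻¹ : Matrix.GeneralLinearGroup (Fin n) R) :
                  Matrix (Fin n) (Fin n) R) v.2.1 v.2.2) p).mulVec w ∈
            Submodule.span R
              (Set.range fun j : Fin r => fun a : Fin s => algebraMap k R (A a j))) ↔
          ∀ q, MvPolynomial.aeval
            (Sum.elim (fun p : Fin s × Fin r => algebraMap k R (A p.1 p.2))
              (Sum.elim
                (fun _ : Unit => algebraMap k R (Matrix.det (A.submatrix idx id))⁻¹)
                (fun v : Fin 2 × Fin n × Fin n =>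
                  if v.1 = 0 then (g : Matrix (Fin n) (Fin n) R) v.2.1 v.2.2
                  else ((g⁻¹ : Matrix.GeneralLinearGroup (Fin n) R) :
                    Matrix (Fin n) (Fin n) R) v.2.1 v.2.2)))
            (Q q) = 0) := by
  have hcard : Fintype.card {a // a ∉ Set.range idx} = s - r := by
    rw [Fintype.card_subtype_compl, Set.card_range_of_injective hidx.injective, Fintype.card_fin,
      Fintype.card_fin]
  let eqv := ((Fintype.equivFinOfCardEq hcard).prodCongr (Equiv.refl (Fin r))).trans finProdFinEquiv
  refine ⟨fun q => Stabilizer.equations idx B (eqv.symm q).1 (eqv.symm q).2,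
    fun q mono hmono => ?_, ?_⟩
  · rw [← Stabilizer.weight_elim_zero_elim_zero_one]
    exact (MvPolynomial.le_weightedTotalDegree _ hmono).trans
      (Stabilizer.weightedTotalDegree_equations_le idx hB _ _)
  intro k _ A hA R _ _ g
  set A' := A.map (algebraMap k R)
  have hP : A'.submatrix idx id *
      (algebraMap k R (A.submatrix idx id).det⁻¹ • (A'.submatrix idx id).adjugate) = 1 := by
    rw [Matrix.mul_smul, Matrix.mul_adjugate, smul_smul, Matrix.submatrix_map,
      ← RingHom.mapMatrix_apply, ← RingHom.map_det, ← map_mul, inv_mul_cancel₀ hA, map_one,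
      one_smul]
  have hspan : Submodule.span R (Set.range fun j (a : Fin s) => algebraMap k R (A a j)) =
      LinearMap.range A'.mulVecLin := (Matrix.range_mulVecLin A').symm
  rw [hspan, Matrix.forall_mulVec_mem_range_iff hP, ← Stabilizer.map_aeval_equations]
  exact ⟨fun h q => h _ (eqv.symm q).1.2 _, fun h a ha j => by
    simpa only [Equiv.symm_apply_apply, A', Matrix.map_apply] using h (eqv (⟨a, ha⟩, j))⟩

/-- **Uniform definability of stabilizers (Lemma 4.3).** Fix `n, s ≥ 1`, `1 ≤ r ≤ s`,
strictly increasing indices `i₁ < ⋯ < i_r` in `Fin s`, `d ≥ 0`, and an `s × s` matrix `B`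
of integer polynomials in `2n²` variables (indexed by `Fin 2 × Fin n × Fin n`, the first
component distinguishing the entries of `g` from those of `g⁻¹`) of total degree at most
`d`. Then there exist `(s−r)·r` polynomials `Q₁, …, Q_{(s−r)r}` with integer coefficients
in the `sr` entries of an `s × r` matrix of variables `T` (indexed by `Fin s × Fin r`),
in one further variable standing for the inverse of `det((T_{i_ℓ,j})_{1≤ℓ,j≤r})` (the
`Unit` summand), and in the `2n²` variables, in which their degree is at most `d`, such
that: for every field `k`, every `A ∈ k^{s×r}` with `det((A_{i_ℓ,j})) ≠ 0`, every
commutative `k`-algebra `R` and every `g ∈ GLₙ(R)`, the `R`-submodule of `R^s` generated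
by the columns of `A` is stable under `B(g, g⁻¹)` if and only if `Qᵢ(A, g, g⁻¹) = 0`
for all `i`. -/
theorem uniform_definability_of_stabilizers
    {n s r : ℕ} (hn : 1 ≤ n) (hs : 1 ≤ s) (hr : 1 ≤ r) (hrs : r ≤ s)
    (idx : Fin r → Fin s) (hidx : StrictMono idx) (d : ℕ)
    (B : Matrix (Fin s) (Fin s) (MvPolynomial (Fin 2 × Fin n × Fin n) ℤ))
    (hB : ∀ a b, (B a b).totalDegree ≤ d) :
    ∃ Q : Fin ((s - r) * r) →
        MvPolynomial ((Fin s × Fin r) ⊕ (Unit ⊕ (Fin 2 × Fin n × Fin n))) ℤ,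
      (∀ q, ∀ mono ∈ (Q q).support,
          ∑ v : Fin 2 × Fin n × Fin n, mono (Sum.inr (Sum.inr v)) ≤ d) ∧
      ∀ (k : Type*) [Field k] (A : Matrix (Fin s) (Fin r) k)
        (_ : Matrix.det (A.submatrix idx id) ≠ 0)
        (R : Type*) [CommRing R] [Algebra k R] (g : Matrix.GeneralLinearGroup (Fin n) R),
        ((∀ w ∈ Submodule.span R
            (Set.range fun j : Fin r => fun a : Fin s => algebraMap k R (A a j)),
          (B.map fun p => MvPolynomial.aeval
              (fun v : Fin 2 × Fin n × Fin n =>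
                if v.1 = 0 then (g : Matrix (Fin n) (Fin n) R) v.2.1 v.2.2
                else ((g⁻¹ : Matrix.GeneralLinearGroup (Fin n) R) :
                  Matrix (Fin n) (Fin n) R) v.2.1 v.2.2) p).mulVec w ∈
            Submodule.span R
              (Set.range fun j : Fin r => fun a : Fin s => algebraMap k R (A a j))) ↔
          ∀ q, MvPolynomial.aeval
            (Sum.elim (fun p : Fin s × Fin r => algebraMap k R (A p.1 p.2))
              (Sum.elim
                (fun _ : Unit => algebraMap k R (Matrix.det (A.submatrix idx id))⁻¹)
                (fun v : Fin 2 × Fin n × Fin n =>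
                  if v.1 = 0 then (g : Matrix (Fin n) (Fin n) R) v.2.1 v.2.2
                  else ((g⁻¹ : Matrix.GeneralLinearGroup (Fin n) R) :
                    Matrix (Fin n) (Fin n) R) v.2.1 v.2.2)))
            (Q q) = 0) :=
  uniform_definability_of_stabilizers_general idx hidx d B hB
end
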